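/- arXiv:2112.14396 — 2 statements merged into one kernel-verified Lean document; each statement's English description precedes it below -/
import Mathlib

section
/- There is an absolute constant C such that for all real numbers U ≥ 1 and R ≥ 1, ∫_{−U}^{U} |∑_{R ≤ r < 2R, r ∈ ℕ} r^{−1/2+it}|² dt ≤ C·(U + R). -/
/-!
On `[-U, U]` the weight `e · exp (-t² / U²)` is at least `1`, and against this Gaussian weight the
square of a Dirichlet polynomial `∑ aᵣ e^{i t ωᵣ}` integrates exactly, because the Fourier
transform of a Gaussian is a Gaussian:
`∫ exp (-t² / U²) |∑ aᵣ e^{i t ωᵣ}|² dt = √π U ∑_{r,s} aᵣ aₛ exp (-(U (ωᵣ - ωₛ) / 2)²)`.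
For `aᵣ = r^{-1/2}`, `ωᵣ = log r` and `R ≤ r, s < 2R` we have `|r - s| ≤ 2R |log r - log s|`,
so the kernel is at most `(1 + (U (r - s) / 4R)²)⁻¹`, whose row sums are `O(1 + R / U)`. With
`aᵣ aₛ ≤ 1 / R` and at most `2R` rows, the double sum is `O(1 + R / U)`, and the integral is
`O(U + R)`.
-/

open MeasureTheory Complex Finset
open scoped Real

theorem integrable_exp_neg_mul_sq_mul_cos {b : ℝ} (hb : 0 < b) (Δ : ℝ) :
    Integrable fun t : ℝ => Real.exp (-b * t ^ 2) * Real.cos (Δ * t) :=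
  (integrable_exp_neg_mul_sq hb).mul_bdd (by fun_prop)
    (.of_forall fun t => (Real.norm_eq_abs _).trans_le (Real.abs_cos_le_one _))

theorem integral_exp_neg_mul_sq_mul_cos {b : ℝ} (hb : 0 < b) (Δ : ℝ) :
    ∫ t : ℝ, Real.exp (-b * t ^ 2) * Real.cos (Δ * t) =
      √(π / b) * Real.exp (-Δ ^ 2 / (4 * b)) := by
  have hbC : 0 < (b : ℂ).re := by simpa using hb
  have hre : ∀ t : ℝ, (cexp (I * Δ * t) * cexp (-b * t ^ 2)).re =
      Real.exp (-b * t ^ 2) * Real.cos (Δ * t) := fun t => by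
    rw [mul_comm, ← ofReal_pow, ← ofReal_neg, ← ofReal_mul, ← ofReal_exp, re_ofReal_mul,
      show I * Δ * t = ((Δ * t : ℝ) : ℂ) * I by push_cast; ring, exp_ofReal_mul_I_re]
  have hint : Integrable fun t : ℝ => cexp (I * Δ * t) * cexp (-b * t ^ 2) :=
    (integrable_cexp_quadratic hbC (I * Δ) 0).congr <| .of_forall fun t => by
      simp only [← Complex.exp_add]; ring_nf
  calc ∫ t : ℝ, Real.exp (-b * t ^ 2) * Real.cos (Δ * t)
      = (∫ t : ℝ, cexp (I * Δ * t) * cexp (-b * t ^ 2)).re := by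
        simp_rw [← hre]; exact integral_re hint
    _ = √(π / b) * Real.exp (-Δ ^ 2 / (4 * b)) := by
        rw [fourierIntegral_gaussian hbC, ← ofReal_div, Real.sqrt_eq_rpow,
          show (1 / 2 : ℂ) = ((1 / 2 : ℝ) : ℂ) by norm_num, ← ofReal_cpow (by positivity)]
        norm_cast

section GaussianWeight

variable {ι : Type*} {b : ℝ} (F : Finset ι) (a ω : ι → ℝ)

theorem norm_sum_mul_exp_sq (t : ℝ) :
    ‖∑ r ∈ F, (a r : ℂ) * cexp (I * t * ω r)‖ ^ 2 =
      ∑ r ∈ F, ∑ s ∈ F, a r * a s * Real.cos ((ω r - ω s) * t) := by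
  have hconj : ∀ s, (starRingEnd ℂ) (cexp (I * t * ω s)) = cexp (-(I * t * ω s)) := fun s => by
    rw [← Complex.exp_conj]; simp
  rw [← ofReal_re (_ ^ 2), ofReal_pow, ← mul_conj', map_sum, sum_mul_sum, re_sum]
  refine sum_congr rfl fun r _ => ?_
  rw [re_sum]
  refine sum_congr rfl fun s _ => ?_
  rw [map_mul, conj_ofReal, hconj, mul_mul_mul_comm, ← Complex.exp_add, ← ofReal_mul,
    show I * t * ω r + -(I * t * ω s) = ((ω r - ω s) * t : ℝ) * I by push_cast; ring,
    re_ofReal_mul, exp_ofReal_mul_I_re]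

theorem integrable_exp_neg_mul_sq_mul_norm_sum_mul_exp_sq (hb : 0 < b) :
    Integrable fun t : ℝ =>
      Real.exp (-b * t ^ 2) * ‖∑ r ∈ F, (a r : ℂ) * cexp (I * t * ω r)‖ ^ 2 := by
  simp_rw [norm_sum_mul_exp_sq, mul_sum, mul_left_comm (Real.exp _)]
  exact integrable_finsetSum _ fun r _ => integrable_finsetSum _ fun s _ =>
    (integrable_exp_neg_mul_sq_mul_cos hb _).const_mul _

theorem integral_exp_neg_mul_sq_mul_norm_sum_mul_exp_sq (hb : 0 < b) :
    ∫ t : ℝ, Real.exp (-b * t ^ 2) * ‖∑ r ∈ F, (a r : ℂ) * cexp (I * t * ω r)‖ ^ 2 =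
      √(π / b) * ∑ r ∈ F, ∑ s ∈ F, a r * a s * Real.exp (-(ω r - ω s) ^ 2 / (4 * b)) := by
  simp_rw [norm_sum_mul_exp_sq, mul_sum, mul_left_comm (Real.exp _)]
  rw [integral_finsetSum _ fun r _ => integrable_finsetSum _ fun s _ =>
    (integrable_exp_neg_mul_sq_mul_cos hb _).const_mul _]
  refine sum_congr rfl fun r _ => ?_
  rw [integral_finsetSum _ fun s _ => (integrable_exp_neg_mul_sq_mul_cos hb _).const_mul _]
  refine sum_congr rfl fun s _ => ?_
  rw [integral_const_mul, integral_exp_neg_mul_sq_mul_cos hb]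
  ring

end GaussianWeight

theorem setIntegral_Icc_le_exp_one_mul_integral_exp_neg_mul_sq_mul {f : ℝ → ℝ} {U : ℝ}
    (hf₀ : ∀ t, 0 ≤ f t) (hf : IntegrableOn f (Set.Icc (-U) U))
    (hwf : Integrable fun t => Real.exp (-(U ^ 2)⁻¹ * t ^ 2) * f t) :
    ∫ t in Set.Icc (-U) U, f t ≤ Real.exp 1 * ∫ t, Real.exp (-(U ^ 2)⁻¹ * t ^ 2) * f t := by
  have hle : ∀ t ∈ Set.Icc (-U) U, f t ≤ Real.exp 1 * (Real.exp (-(U ^ 2)⁻¹ * t ^ 2) * f t) := by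
    intro t ht
    have hwidth : (U ^ 2)⁻¹ * t ^ 2 ≤ 1 := inv_mul_le_one_of_le₀ (sq_le_sq' ht.1 ht.2) (sq_nonneg U)
    rw [← mul_assoc, ← Real.exp_add]
    exact le_mul_of_one_le_left (hf₀ t) (Real.one_le_exp (by linarith))
  calc ∫ t in Set.Icc (-U) U, f t
      ≤ ∫ t in Set.Icc (-U) U, Real.exp 1 * (Real.exp (-(U ^ 2)⁻¹ * t ^ 2) * f t) :=
        setIntegral_mono_on hf (hwf.integrableOn.const_mul _) measurableSet_Icc hle
    _ ≤ Real.exp 1 * ∫ t, Real.exp (-(U ^ 2)⁻¹ * t ^ 2) * f t := by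
        rw [integral_const_mul]
        exact mul_le_mul_of_nonneg_left (setIntegral_le_integral hwf
          (.of_forall fun t => mul_nonneg (Real.exp_pos _).le (hf₀ t))) (Real.exp_pos 1).le

theorem abs_sub_le_mul_abs_log_sub_log {x y M : ℝ} (hx : 0 < x) (hy : 0 < y) (hxM : x ≤ M)
    (hyM : y ≤ M) : |x - y| ≤ M * |Real.log x - Real.log y| := by
  wlog hyx : y ≤ x generalizing x y
  · rw [abs_sub_comm, abs_sub_comm (Real.log x)]
    exact this hy hx hyM hxM (le_of_not_ge hyx)
  have hlog : 1 - y / x ≤ Real.log x - Real.log y := by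
    rw [← Real.log_div hx.ne' hy.ne', ← inv_div]
    exact Real.one_sub_inv_le_log_of_pos (by positivity)
  have hlog₀ : 0 ≤ Real.log x - Real.log y := by
    linarith [Real.log_le_log hy hyx]
  rw [abs_of_nonneg (by linarith), abs_of_nonneg hlog₀]
  calc x - y = x * (1 - y / x) := by field_simp
    _ ≤ M * (Real.log x - Real.log y) :=
        mul_le_mul hxM hlog (sub_nonneg.2 ((div_le_one hx).2 hyx)) (hx.le.trans hxM)

theorem sum_range_inv_one_add_sq_le {c : ℝ} (hc : 0 < c) (m : ℕ) :
    ∑ d ∈ range m, (1 + (c * (d + 1)) ^ 2)⁻¹ ≤ 2 / c := by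
  have htel : ∀ d : ℕ, (1 + (c * (d + 1)) ^ 2)⁻¹ ≤
      2 / c * ((1 + c * d)⁻¹ - (1 + c * (d + 1 : ℕ))⁻¹) := fun d => by
    have hprod : (1 + c * d) * (1 + c * (d + 1)) ≤ 2 * (1 + (c * (d + 1)) ^ 2) := by
      nlinarith [sq_nonneg (c * (d + 1) - 1), mul_nonneg hc.le (Nat.cast_nonneg (α := ℝ) d)]
    push_cast
    rw [inv_sub_inv (by positivity) (by positivity), div_mul_div_comm, le_div_iff₀ (by positivity),
      inv_mul_eq_div, div_le_iff₀ (by positivity)]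
    nlinarith [mul_le_mul_of_nonneg_left hprod hc.le]
  calc ∑ d ∈ range m, (1 + (c * (d + 1)) ^ 2)⁻¹
      ≤ ∑ d ∈ range m, 2 / c * ((1 + c * d)⁻¹ - (1 + c * (d + 1 : ℕ))⁻¹) :=
        sum_le_sum fun d _ => htel d
    _ = 2 / c * (1 - (1 + c * m)⁻¹) := by rw [← mul_sum, sum_range_sub']; simp
    _ ≤ 2 / c := mul_le_of_le_one_right (by positivity) (by simp; positivity)

theorem sum_Ico_comp_sub_le {g : ℝ → ℝ} (hg : ∀ x, g (-x) = g x) (hg₀ : ∀ x, 0 ≤ g x)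
    (n₀ : ℕ) {r N : ℕ} (hr : r < N) :
    ∑ s ∈ Ico n₀ N, g (s - r) ≤ g 0 + 2 * ∑ d ∈ range N, g (d + 1) := by
  have hleft : ∑ s ∈ range (r + 1), g (s - r) = g 0 + ∑ d ∈ range r, g (d + 1) := by
    have hreflect : ∀ j ∈ range (r + 1), g ((r + 1 - 1 - j : ℕ) - r) = g j := fun j hj => by
      rw [Nat.add_sub_cancel, Nat.cast_sub (by simp at hj; omega), sub_sub_cancel_left, hg]
    rw [← sum_range_reflect, sum_congr rfl hreflect, sum_range_succ']
    simp [add_comm]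
  have hright : ∑ s ∈ Ico (r + 1) N, g (s - r) = ∑ d ∈ range (N - (r + 1)), g (d + 1) := by
    rw [sum_Ico_eq_sum_range]
    refine sum_congr rfl fun d _ => ?_
    push_cast; ring_nf
  have hsub : ∀ m ≤ N, ∑ d ∈ range m, g (d + 1) ≤ ∑ d ∈ range N, g (d + 1) := fun m hm =>
    sum_le_sum_of_subset_of_nonneg (range_subset_range.2 hm) fun _ _ _ => hg₀ _
  calc ∑ s ∈ Ico n₀ N, g (s - r)
      ≤ ∑ s ∈ range N, g (s - r) :=
        sum_le_sum_of_subset_of_nonneg (fun s hs => by simp at hs ⊢; omega) fun _ _ _ => hg₀ _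
    _ = g 0 + ∑ d ∈ range r, g (d + 1) + ∑ d ∈ range (N - (r + 1)), g (d + 1) := by
        rw [← sum_range_add_sum_Ico _ hr, hleft, hright]
    _ ≤ g 0 + 2 * ∑ d ∈ range N, g (d + 1) := by
        linarith [hsub r hr.le, hsub (N - (r + 1)) (Nat.sub_le _ _)]

theorem exp_neg_le_inv_one_add {x : ℝ} (hx : -1 < x) : Real.exp (-x) ≤ (1 + x)⁻¹ := by
  rw [Real.exp_neg]
  exact inv_anti₀ (by linarith) (by linarith [Real.add_one_le_exp x])

theorem rpow_neg_half_mul_rpow_neg_half_le {R r s : ℝ} (hR : 0 < R) (hr : R ≤ r) (hs : R ≤ s) :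
    r ^ (-(1 / 2) : ℝ) * s ^ (-(1 / 2) : ℝ) ≤ R⁻¹ := by
  calc r ^ (-(1 / 2) : ℝ) * s ^ (-(1 / 2) : ℝ) ≤ R ^ (-(1 / 2) : ℝ) * R ^ (-(1 / 2) : ℝ) :=
        mul_le_mul (Real.rpow_le_rpow_of_nonpos hR hr (by norm_num))
          (Real.rpow_le_rpow_of_nonpos hR hs (by norm_num))
          (Real.rpow_nonneg (hR.le.trans hs) _) (Real.rpow_nonneg hR.le _)
    _ = R⁻¹ := by rw [← Real.rpow_add hR]; norm_num [Real.rpow_neg_one]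

section DyadicBlock

variable {U R : ℝ}

theorem sum_Ico_ceil_exp_neg_sq_log_sub_le (hU : 0 < U) (hR : 0 < R) {r : ℕ}
    (hr : r ∈ Ico ⌈R⌉₊ ⌈2 * R⌉₊) :
    ∑ s ∈ Ico ⌈R⌉₊ ⌈2 * R⌉₊, Real.exp (-(U * (Real.log r - Real.log s) / 2) ^ 2) ≤
      1 + 16 * R / U := by
  set c := U / (4 * R) with hc_def
  have hc : 0 < c := by positivity
  have hterm : ∀ s ∈ Ico ⌈R⌉₊ ⌈2 * R⌉₊,
      Real.exp (-(U * (Real.log r - Real.log s) / 2) ^ 2) ≤ (1 + (c * (s - r)) ^ 2)⁻¹ := by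
    intro s hs
    simp only [mem_Ico, Nat.ceil_le, Nat.lt_ceil] at hr hs
    have hgap := abs_sub_le_mul_abs_log_sub_log (by linarith) (by linarith) hs.2.le hr.2.le
    have habs : |c * (s - r)| ≤ |U * (Real.log r - Real.log s) / 2| := by
      rw [abs_mul, abs_of_pos hc, abs_div, abs_mul, abs_of_pos hU, abs_two]
      calc c * |(s : ℝ) - r| ≤ c * (2 * R * |Real.log s - Real.log r|) := by gcongr
        _ = U * |Real.log r - Real.log s| / 2 := by rw [abs_sub_comm, hc_def]; field_simp; ring
    exact (Real.exp_le_exp.2 (neg_le_neg (sq_le_sq.2 habs))).trans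
      (exp_neg_le_inv_one_add (neg_one_lt_zero.trans_le (sq_nonneg _)))
  calc ∑ s ∈ Ico ⌈R⌉₊ ⌈2 * R⌉₊, Real.exp (-(U * (Real.log r - Real.log s) / 2) ^ 2)
      ≤ ∑ s ∈ Ico ⌈R⌉₊ ⌈2 * R⌉₊, (1 + (c * (s - r)) ^ 2)⁻¹ := sum_le_sum hterm
    _ ≤ 1 + 2 * ∑ d ∈ range ⌈2 * R⌉₊, (1 + (c * (d + 1)) ^ 2)⁻¹ := by
        refine (sum_Ico_comp_sub_le (g := fun x => (1 + (c * x) ^ 2)⁻¹)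
          (fun x => by simp [mul_neg]) (fun x => by positivity) ⌈R⌉₊ (mem_Ico.1 hr).2).trans_eq ?_
        norm_num
    _ ≤ 1 + 2 * (2 / c) := by gcongr; exact sum_range_inv_one_add_sq_le hc _
    _ = 1 + 16 * R / U := by rw [hc_def]; field_simp; ring

theorem card_Ico_ceil_le (hR : 0 ≤ R) : (#(Ico ⌈R⌉₊ ⌈2 * R⌉₊) : ℝ) ≤ R + 1 := by
  rw [Nat.card_Ico]
  rcases le_total ⌈R⌉₊ ⌈2 * R⌉₊ with h | h
  · rw [Nat.cast_sub h]
    linarith [Nat.le_ceil R, Nat.ceil_lt_add_one (by positivity : 0 ≤ 2 * R)]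
  · rw [Nat.sub_eq_zero_of_le h, Nat.cast_zero]
    linarith

theorem sum_Ico_ceil_sum_rpow_mul_exp_neg_sq_log_sub_le (hU : 0 < U) (hR : 1 ≤ R) :
    ∑ r ∈ Ico ⌈R⌉₊ ⌈2 * R⌉₊, ∑ s ∈ Ico ⌈R⌉₊ ⌈2 * R⌉₊,
        (r : ℝ) ^ (-(1 / 2) : ℝ) * (s : ℝ) ^ (-(1 / 2) : ℝ) *
          Real.exp (-(U * (Real.log r - Real.log s) / 2) ^ 2) ≤ 2 + 32 * R / U := by
  have hR₀ : 0 < R := by linarith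
  have hrow : ∀ r ∈ Ico ⌈R⌉₊ ⌈2 * R⌉₊, ∑ s ∈ Ico ⌈R⌉₊ ⌈2 * R⌉₊,
      (r : ℝ) ^ (-(1 / 2) : ℝ) * (s : ℝ) ^ (-(1 / 2) : ℝ) *
        Real.exp (-(U * (Real.log r - Real.log s) / 2) ^ 2) ≤ R⁻¹ * (1 + 16 * R / U) := by
    intro r hr
    have hmem : ∀ s ∈ Ico ⌈R⌉₊ ⌈2 * R⌉₊, R ≤ (s : ℝ) := fun s hs => by
      simp only [mem_Ico, Nat.ceil_le] at hs; exact hs.1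
    calc _ ≤ ∑ s ∈ Ico ⌈R⌉₊ ⌈2 * R⌉₊,
            R⁻¹ * Real.exp (-(U * (Real.log r - Real.log s) / 2) ^ 2) :=
          sum_le_sum fun s hs => mul_le_mul_of_nonneg_right
            (rpow_neg_half_mul_rpow_neg_half_le hR₀ (hmem r hr) (hmem s hs)) (Real.exp_pos _).le
      _ ≤ R⁻¹ * (1 + 16 * R / U) := by
          rw [← mul_sum]
          gcongr
          exact sum_Ico_ceil_exp_neg_sq_log_sub_le hU hR₀ hr
  calc _ ≤ ∑ r ∈ Ico ⌈R⌉₊ ⌈2 * R⌉₊, R⁻¹ * (1 + 16 * R / U) := sum_le_sum hrow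
    _ ≤ (2 * R) * (R⁻¹ * (1 + 16 * R / U)) := by
        rw [sum_const, nsmul_eq_mul]
        gcongr
        linarith [card_Ico_ceil_le hR₀.le]
    _ = 2 + 32 * R / U := by field_simp; ring

end DyadicBlock

/-- Mean-value estimate for the Dirichlet polynomial `∑_{R ≤ r < 2R} r^{-1/2+it}`:
there is an absolute constant `C` such that for all `U, R ≥ 1`,
`∫_{-U}^{U} |∑_{R ≤ r < 2R} r^{-1/2+it}|² dt ≤ C (U + R)`. -/
theorem dirichlet_polynomial_mean_value :
    ∃ C : ℝ, 0 < C ∧ ∀ (U R : ℝ), 1 ≤ U → 1 ≤ R →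
      (∫ t in Set.Icc (-U) U,
        ‖∑ r ∈ Finset.Ico ⌈R⌉₊ ⌈2 * R⌉₊,
            (((r : ℝ) ^ (-(1/2) : ℝ) : ℝ) : ℂ) *
              Complex.exp (Complex.I * (t : ℂ) * (Real.log r : ℂ))‖ ^ 2)
        ≤ C * (U + R) := by
  refine ⟨192, by norm_num, fun U R hU hR => ?_⟩
  have hU₀ : 0 < U := by linarith
  have hexponent : ∀ Δ : ℝ, -Δ ^ 2 / (4 * (U ^ 2)⁻¹) = -(U * Δ / 2) ^ 2 := fun Δ => by
    field_simp; ring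
  have hsqrt : √(π / (U ^ 2)⁻¹) = √π * U := by
    rw [div_inv_eq_mul, Real.sqrt_mul Real.pi_pos.le, Real.sqrt_sq hU₀.le]
  have hconst : Real.exp 1 * √π ≤ 6 := by
    have hπ : √π ≤ 2 := Real.sqrt_le_iff.2 ⟨by norm_num, by linarith [Real.pi_le_four]⟩
    nlinarith [Real.exp_one_lt_d9, Real.sqrt_nonneg π]
  calc _ ≤ Real.exp 1 * ∫ t : ℝ, Real.exp (-(U ^ 2)⁻¹ * t ^ 2) *
          ‖∑ r ∈ Ico ⌈R⌉₊ ⌈2 * R⌉₊, (((r : ℝ) ^ (-(1 / 2) : ℝ) : ℝ) : ℂ) *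
            cexp (I * t * Real.log r)‖ ^ 2 :=
        setIntegral_Icc_le_exp_one_mul_integral_exp_neg_mul_sq_mul (fun t => sq_nonneg _)
          (Continuous.integrableOn_Icc (by fun_prop))
          (integrable_exp_neg_mul_sq_mul_norm_sum_mul_exp_sq _ _ _ (by positivity))
    _ = Real.exp 1 * √π * U * ∑ r ∈ Ico ⌈R⌉₊ ⌈2 * R⌉₊, ∑ s ∈ Ico ⌈R⌉₊ ⌈2 * R⌉₊,
          (r : ℝ) ^ (-(1 / 2) : ℝ) * (s : ℝ) ^ (-(1 / 2) : ℝ) *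
            Real.exp (-(U * (Real.log r - Real.log s) / 2) ^ 2) := by
        rw [integral_exp_neg_mul_sq_mul_norm_sum_mul_exp_sq _
          (fun r : ℕ => (r : ℝ) ^ (-(1 / 2) : ℝ)) (fun r : ℕ => Real.log r) (by positivity), hsqrt]
        simp_rw [hexponent, mul_assoc]
    _ ≤ Real.exp 1 * √π * U * (2 + 32 * R / U) := by
        gcongr; exact sum_Ico_ceil_sum_rpow_mul_exp_neg_sq_log_sub_le hU₀ hR
    _ = Real.exp 1 * √π * (2 * U + 32 * R) := by field_simp
    _ ≤ 6 * (2 * U + 32 * R) := by gcongr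
    _ ≤ 192 * (U + R) := by linarith
end

section
/- For every ν ∈ ℝ and every natural number A there is a constant C = C(ν, A) such that for all y ∈ ℝ: γ_ν(1/2 − A − iy) ≠ 0 and |γ_ν(1/2 + A + iy)| ≤ C·(1 + |y|)^{3A}·|γ_ν(1/2 − A − iy)|. -/
open Complex

/-- The archimedean gamma factor of a self-dual Hecke–Maass cusp form for `SL(3,ℤ)` with
Langlands parameter `(iν, 0, -iν)`:
`γ_ν(z) = π^{-3z/2} Γ((z-iν)/2) Γ(z/2) Γ((z+iν)/2)`. -/
noncomputable def gammaFactor (ν : ℝ) (z : ℂ) : ℂ :=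
  (Real.pi : ℂ) ^ (-3 * z / 2) * Complex.Gamma ((z - Complex.I * ν) / 2) *
    Complex.Gamma (z / 2) * Complex.Gamma ((z + Complex.I * ν) / 2)

/-!
With `s = 1/2 - A - iy` we have `1/2 + A + iy = conj s + 2A`, and the three Gamma arguments of
`γ_ν(conj s + 2A)` are the conjugates of those of `γ_ν(s)` (with `±ν` swapped) shifted by `A`.
Since `|Γ(conj u)| = |Γ(u)|` and `Γ(u + A) = u (u + 1) ⋯ (u + A - 1) Γ(u)`, each Gamma
quotient is at most `(|u| + A)^A ≪ (1 + |y|)^A`, while the factor `π^{-3z/2}` only decreases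
as `Re z` grows.
No argument is a pole because `Re s = 1/2 - A` is not an even integer.
-/

open ComplexConjugate

lemma ascPochhammer_eval_eq_prod_range {R : Type*} [CommSemiring R] (n : ℕ) (r : R) :
    (ascPochhammer R n).eval r = ∏ j ∈ Finset.range n, (r + j) := by
  induction n with
  | zero => simp
  | succ n ih => simp [ascPochhammer_succ_right, ih, ← Finset.prod_range_succ]

namespace Complex

lemma norm_Gamma_add_nat_le {s : ℂ} (hs : ∀ m : ℕ, s ≠ -m) (n : ℕ) :
    ‖Gamma (s + n)‖ ≤ (‖s‖ + n) ^ n * ‖Gamma s‖ := by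
  have hΓ : Gamma (s + n) = (∏ j ∈ Finset.range n, (s + j)) * Gamma s := by
    rw [← ascPochhammer_eval_eq_prod_range, ← Gamma_add_nat_div_Gamma_eq s hs,
      div_mul_cancel₀ _ (Gamma_ne_zero hs)]
  have hfactor : ∀ j ∈ Finset.range n, ‖s + j‖ ≤ ‖s‖ + n := fun j hj => by
    have hjn : (j : ℝ) ≤ n := by exact_mod_cast (Finset.mem_range.mp hj).le
    calc ‖s + j‖ ≤ ‖s‖ + ‖(j : ℂ)‖ := norm_add_le _ _
      _ ≤ ‖s‖ + n := by rw [norm_natCast]; linarith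
  rw [hΓ, norm_mul, norm_prod]
  gcongr
  simpa using Finset.prod_le_prod (fun j _ => norm_nonneg _) hfactor

lemma norm_Gamma_conj_add_nat_le {s : ℂ} (hs : ∀ m : ℕ, s ≠ -m) (n : ℕ) :
    ‖Gamma (conj s + n)‖ ≤ (‖s‖ + n) ^ n * ‖Gamma s‖ := by
  have : conj s + n = conj (s + n) := by simp
  rw [this, Gamma_conj, RCLike.norm_conj]
  exact norm_Gamma_add_nat_le hs n

end Complex

lemma norm_pi_cpow_conj_add_le (s : ℂ) (n : ℕ) :
    ‖(Real.pi : ℂ) ^ (-3 * (conj s + 2 * n) / 2)‖ ≤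
      ‖(Real.pi : ℂ) ^ (-3 * s / 2)‖ := by
  have hre : (-3 * (conj s + 2 * n) / 2).re = (-3 * s / 2).re - 3 * n := by
    simp only [neg_mul, div_ofNat_re, neg_re, mul_re, re_ofNat, add_re, conj_re, natCast_re,
      im_ofNat, natCast_im, mul_zero, sub_zero, add_im, conj_im, mul_im, zero_mul, add_zero,
      mul_neg, neg_zero]
    ring
  rw [norm_cpow_eq_rpow_re_of_pos Real.pi_pos, norm_cpow_eq_rpow_re_of_pos Real.pi_pos, hre]
  exact Real.rpow_le_rpow_of_exponent_le (by linarith [Real.pi_gt_three])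
    (by linarith [n.cast_nonneg (α := ℝ)])

section gammaFactor

variable {ν : ℝ} {s : ℂ}

lemma ne_neg_natCast_of_re_eq_half (hs : ∀ m : ℕ, s.re ≠ -2 * m) {u : ℂ}
    (hu : u.re = s.re / 2) (m : ℕ) : u ≠ -m := fun h => hs m <| by
  rw [h] at hu; simp only [neg_re, natCast_re] at hu; linarith

lemma gammaFactor_ne_zero (hs : ∀ m : ℕ, s.re ≠ -2 * m) : gammaFactor ν s ≠ 0 := by
  have hpole := fun u hu => Gamma_ne_zero (ne_neg_natCast_of_re_eq_half hs (u := u) hu)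
  refine mul_ne_zero (mul_ne_zero (mul_ne_zero ?_ (hpole _ ?_)) (hpole _ ?_)) (hpole _ ?_)
  · exact cpow_ne_zero_iff.mpr (Or.inl (ofReal_ne_zero.mpr Real.pi_ne_zero))
  all_goals simp

lemma norm_gammaFactor_conj_add_le (hs : ∀ m : ℕ, s.re ≠ -2 * m) (n : ℕ) :
    ‖gammaFactor ν (conj s + 2 * n)‖ ≤
      ((‖s‖ + |ν|) / 2 + n) ^ (3 * n) * ‖gammaFactor ν s‖ := by
  have hfactor : ∀ u : ℂ, u.re = s.re / 2 → ‖u‖ ≤ (‖s‖ + |ν|) / 2 →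
      ‖Gamma (conj u + n)‖ ≤ ((‖s‖ + |ν|) / 2 + n) ^ n * ‖Gamma u‖ := fun u hu hur =>
    (norm_Gamma_conj_add_nat_le (ne_neg_natCast_of_re_eq_half hs hu) n).trans (by gcongr)
  have hnorm_sub : ‖(s - I * ν) / 2‖ ≤ (‖s‖ + |ν|) / 2 := by
    rw [norm_div, RCLike.norm_ofNat]
    gcongr
    simpa using norm_sub_le s (I * ν)
  have hnorm_half : ‖s / 2‖ ≤ (‖s‖ + |ν|) / 2 := by
    rw [norm_div, RCLike.norm_ofNat]
    gcongr
    linarith [abs_nonneg ν]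
  have hnorm_add : ‖(s + I * ν) / 2‖ ≤ (‖s‖ + |ν|) / 2 := by
    rw [norm_div, RCLike.norm_ofNat]
    gcongr
    simpa using norm_add_le s (I * ν)
  have e_sub : (conj s + 2 * n - I * ν) / 2 = conj ((s + I * ν) / 2) + n := by
    simp only [map_div₀, map_add, map_mul, conj_I, conj_ofReal, neg_mul, map_ofNat]; ring
  have e_half : (conj s + 2 * n) / 2 = conj (s / 2) + n := by
    simp only [map_div₀, map_ofNat]; ring
  have e_add : (conj s + 2 * n + I * ν) / 2 = conj ((s - I * ν) / 2) + n := by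
    simp only [map_div₀, map_sub, map_mul, conj_I, conj_ofReal, neg_mul, sub_neg_eq_add,
      map_ofNat]; ring
  unfold gammaFactor
  rw [e_sub, e_half, e_add]
  simp only [norm_mul]
  calc _ ≤ ‖(Real.pi : ℂ) ^ (-3 * s / 2)‖ *
        (((‖s‖ + |ν|) / 2 + n) ^ n * ‖Gamma ((s + I * ν) / 2)‖) *
        (((‖s‖ + |ν|) / 2 + n) ^ n * ‖Gamma (s / 2)‖) *
        (((‖s‖ + |ν|) / 2 + n) ^ n * ‖Gamma ((s - I * ν) / 2)‖) := by
        gcongr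
        exacts [norm_pi_cpow_conj_add_le s n, hfactor _ (by simp) hnorm_add,
          hfactor _ (by simp) hnorm_half, hfactor _ (by simp) hnorm_sub]
    _ = _ := by ring

end gammaFactor

/-- Stirling-type bound on the shifted contour `Re(s) = -A`:
`γ_ν(1/2 - A - iy) ≠ 0` and `|γ_ν(1/2 + A + iy)| ≤ C (1+|y|)^{3A} |γ_ν(1/2 - A - iy)|`. -/
theorem gammaFactor_quotient_bound (ν : ℝ) (A : ℕ) :
    ∃ C : ℝ, 0 < C ∧ ∀ y : ℝ,
      gammaFactor ν (1/2 - A - Complex.I * y) ≠ 0 ∧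
      ‖gammaFactor ν (1/2 + A + Complex.I * y)‖ ≤
        C * (1 + |y|) ^ (3 * A) * ‖gammaFactor ν (1/2 - A - Complex.I * y)‖ := by
  refine ⟨(2 * A + 1 + |ν|) ^ (3 * A), by positivity, fun y => ?_⟩
  set s : ℂ := 1/2 - A - I * y
  have hs_re : s.re = 1/2 - A := by simp [s]
  have hs : ∀ m : ℕ, s.re ≠ -2 * m := fun m h => by
    have h' : ((1 + 4 * m : ℕ) : ℝ) = (2 * A : ℕ) := by push_cast; linarith
    have := Nat.cast_injective h'
    omega
  have hs_norm : ‖s‖ ≤ 1/2 + A + |y| :=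
    calc ‖s‖ ≤ ‖(1/2 : ℂ)‖ + ‖(A : ℂ)‖ + ‖I * y‖ :=
          (norm_sub_le _ _).trans (by gcongr; exact norm_sub_le _ _)
      _ = 1/2 + A + |y| := by simp
  have hs_conj : 1/2 + A + I * y = conj s + 2 * A := by
    simp only [s, one_div, map_sub, map_inv₀, map_ofNat, map_natCast, map_mul, conj_I,
      conj_ofReal, neg_mul, sub_neg_eq_add]
    ring
  refine ⟨gammaFactor_ne_zero hs, ?_⟩
  rw [hs_conj, ← mul_pow]
  refine (norm_gammaFactor_conj_add_le hs A).trans ?_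
  gcongr
  nlinarith [abs_nonneg ν, abs_nonneg y,
    mul_nonneg (by positivity : (0 : ℝ) ≤ 2 * A + |ν|) (abs_nonneg y)]
end
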